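/- arXiv:1604.07515 — 2 statements merged into one kernel-verified Lean document; each statement's English description precedes it below -/
import Mathlib

section
/- In the parallel PR-Nibble process with the optimized update rule, for every i ≥ 1 the residual vector is entrywise nonnegative (r_i(v) ≥ 0 for all v ∈ V) and its total mass is nonincreasing and bounded by 1: Σ_{v∈V} r_{i+1}(v) ≤ Σ_{v∈V} r_i(v) ≤ 1. -/
/-!
A push at an active vertex `v` keeps nothing at `v` and spreads `c · r(v)` evenly over its
`d(v)` neighbours, so it turns the mass `r(v)` into `c · r(v)` with `c = (1-α)/(1+α) ∈ [0,1]`.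
Hence nonnegativity is preserved and the total mass can only drop from its initial value `1`.
-/

open Finset

namespace SimpleGraph

variable {V : Type*} [Fintype V] (G : SimpleGraph V) [DecidableRel G.Adj]

theorem sum_ite_adj_div_degree {v : V} (hv : G.degree v ≠ 0) (a : ℝ) :
    ∑ w, (if G.Adj v w then a / (G.degree v : ℝ) else 0) = a := by
  rw [← sum_filter, ← neighborFinset_eq_filter, sum_const, card_neighborFinset_eq_degree,
    nsmul_eq_mul]
  field_simp

variable [DecidableEq V]

noncomputable def pushResidual (c : ℝ) (A : Finset V) (r : V → ℝ) (w : V) : ℝ :=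
  (if w ∈ A then 0 else r w) + ∑ v ∈ A, if G.Adj v w then c * r v / (G.degree v : ℝ) else 0

variable {G}

theorem sum_pushResidual {c : ℝ} {A : Finset V} (r : V → ℝ) (hA : ∀ v ∈ A, G.degree v ≠ 0) :
    ∑ w, G.pushResidual c A r w = ∑ w, r w - (1 - c) * ∑ v ∈ A, r v := by
  have hkept : ∀ w, (if w ∈ A then 0 else r w) = r w - if w ∈ A then r w else 0 := by
    intro w; split_ifs <;> ring
  have hpushed : ∑ w, ∑ v ∈ A, (if G.Adj v w then c * r v / (G.degree v : ℝ) else 0)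
      = c * ∑ v ∈ A, r v := by
    rw [sum_comm, mul_sum]
    exact sum_congr rfl fun v hv => G.sum_ite_adj_div_degree (hA v hv) _
  simp only [pushResidual, sum_add_distrib, hkept, sum_sub_distrib, sum_ite_mem, univ_inter,
    hpushed]
  ring

theorem pushResidual_nonneg {c : ℝ} {A : Finset V} {r : V → ℝ} (hc : 0 ≤ c)
    (hr : ∀ v, 0 ≤ r v) (w : V) : 0 ≤ G.pushResidual c A r w := by
  refine add_nonneg (by split_ifs <;> simp [hr w]) (sum_nonneg fun v _ => ?_)
  split_ifs
  · exact div_nonneg (mul_nonneg hc (hr v)) (Nat.cast_nonneg _)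
  · exact le_rfl

theorem sum_pushResidual_le {c : ℝ} {A : Finset V} {r : V → ℝ} (hc : c ≤ 1)
    (hA : ∀ v ∈ A, G.degree v ≠ 0) (hr : ∀ v ∈ A, 0 ≤ r v) :
    ∑ w, G.pushResidual c A r w ≤ ∑ w, r w := by
  rw [sum_pushResidual r hA]
  have : 0 ≤ (1 - c) * ∑ v ∈ A, r v := mul_nonneg (by linarith) (sum_nonneg hr)
  linarith

end SimpleGraph

open SimpleGraph in
theorem parallel_pr_nibble_optimized_residual_nonneg_mass_bounded_general
    {V : Type*} [Fintype V] [DecidableEq V] (G : SimpleGraph V) [DecidableRel G.Adj]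
    (hd : ∀ v : V, 0 < G.degree v)
    (α : ℝ) (hα : α ∈ Set.Ioo (0 : ℝ) 1)
    (x : V)
    (r : ℕ → V → ℝ) (A : ℕ → Finset V)
    (hinit : ∀ v : V, r 1 v = if v = x then 1 else 0)
    (hrec : ∀ i, 1 ≤ i → ∀ w : V,
      r (i + 1) w = (if w ∈ A i then 0 else r i w)
        + ∑ v ∈ A i, if G.Adj v w then
            ((1 - α) / (1 + α)) * r i v / (G.degree v : ℝ) else 0) :
    ∀ i, 1 ≤ i →
      (∀ v : V, 0 ≤ r i v) ∧
      (∑ v, r (i + 1) v ≤ ∑ v, r i v) ∧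
      (∑ v, r i v ≤ 1) := by
  obtain ⟨hα0, hα1⟩ := hα
  have hc0 : 0 ≤ (1 - α) / (1 + α) := div_nonneg (by linarith) (by linarith)
  have hc1 : (1 - α) / (1 + α) ≤ 1 := (div_le_one (by linarith)).2 (by linarith)
  have hstep (i) (hi : 1 ≤ i) : r (i + 1) = G.pushResidual ((1 - α) / (1 + α)) (A i) (r i) :=
    funext (hrec i hi)
  have hnonneg : ∀ i, 1 ≤ i → ∀ v, 0 ≤ r i v := by
    refine Nat.le_induction (fun v => by rw [hinit]; split_ifs <;> norm_num) fun i hi ih => ?_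
    rw [hstep i hi]
    exact pushResidual_nonneg hc0 ih
  have hmono (i) (hi : 1 ≤ i) : ∑ v, r (i + 1) v ≤ ∑ v, r i v := by
    rw [hstep i hi]
    exact sum_pushResidual_le hc1 (fun v _ => (hd v).ne') fun v _ => hnonneg i hi v
  have hmass : ∀ i, 1 ≤ i → ∑ v, r i v ≤ 1 :=
    Nat.le_induction (by simp [hinit]) fun i hi ih => (hmono i hi).trans ih
  exact fun i hi => ⟨hnonneg i hi, hmono i hi, hmass i hi⟩

/-- **Parallel PR-Nibble (optimized update rule): residuals are nonnegative and
total residual mass is nonincreasing and bounded by 1.**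
For every `i ≥ 1`: `r i v ≥ 0` for all `v`, and
`Σ_v r (i+1) v ≤ Σ_v r i v ≤ 1`. -/
theorem parallel_pr_nibble_optimized_residual_nonneg_mass_bounded
    {V : Type*} [Fintype V] [DecidableEq V] (G : SimpleGraph V) [DecidableRel G.Adj]
    (hd : ∀ v : V, 0 < G.degree v)
    (α ε : ℝ) (hα : α ∈ Set.Ioo (0 : ℝ) 1) (hε : 0 < ε)
    (x : V)
    (r : ℕ → V → ℝ) (A : ℕ → Finset V)
    (hinit : ∀ v : V, r 1 v = if v = x then 1 else 0)
    (hA : ∀ i, 1 ≤ i → ∀ v : V, v ∈ A i ↔ ε * (G.degree v : ℝ) ≤ r i v)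
    (hrec : ∀ i, 1 ≤ i → ∀ w : V,
      r (i + 1) w = (if w ∈ A i then 0 else r i w)
        + ∑ v ∈ A i, if G.Adj v w then
            ((1 - α) / (1 + α)) * r i v / (G.degree v : ℝ) else 0) :
    ∀ i, 1 ≤ i →
      (∀ v : V, 0 ≤ r i v) ∧
      (∑ v, r (i + 1) v ≤ ∑ v, r i v) ∧
      (∑ v, r i v ≤ 1) :=
  parallel_pr_nibble_optimized_residual_nonneg_mass_bounded_general G hd α hα x r A hinit hrec
end

section
/- For any schedule of pushes in PR-Nibble with the optimized update rule — that is, any sequence of subsets B_i with B_i ⊆ {v ∈ V : r_i(v) ≥ ε·d(v)} — the total degree of all pushed vertices satisfies Σ_{i=1}^{T} Σ_{v ∈ B_i} d(v) ≤ 1/(α·ε) for every T ≥ 1. This covers both the sequential algorithm (each B_i a singleton) and the parallel algorithm (each B_i the full set of active vertices). -/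
/-!
Residuals stay nonnegative, and a push of `v` keeps `c · r(v)` of its mass in the graph, where
`c = (1 - α)/(1 + α)`: the total residual mass, which starts at `1`, drops by at least
`(1 - c) · r(v) = 2α/(1 + α) · r(v) ≥ α ε d(v)`. Summing over all pushes gives `α ε Σ d(v) ≤ 1`.
-/

open Finset

lemma sum_Icc_le_sub_of_add_le {m a : ℕ → ℝ} (h : ∀ i, 1 ≤ i → m (i + 1) + a i ≤ m i) (T : ℕ) :
    ∑ i ∈ Icc 1 T, a i ≤ m 1 - m (T + 1) := by
  induction T with
  | zero => simp
  | succ T ih =>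
    rw [sum_Icc_succ_top (by omega)]
    linarith [h (T + 1) (by omega)]

namespace SimpleGraph

variable {V : Type*} [Fintype V] [DecidableEq V]

noncomputable def pushStep (G : SimpleGraph V) [DecidableRel G.Adj] (c : ℝ) (B : Finset V)
    (p : V → ℝ) (w : V) : ℝ :=
  (if w ∈ B then 0 else p w) + ∑ v ∈ B, if G.Adj v w then c * p v / G.degree v else 0

variable {G : SimpleGraph V} [DecidableRel G.Adj]

omit [DecidableEq V] in
lemma sum_ite_adj_eq_degree_mul (v : V) (a : ℝ) :
    ∑ w, (if G.Adj v w then a else 0) = G.degree v * a := by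
  rw [← sum_filter, ← neighborFinset_eq_filter, sum_const, card_neighborFinset_eq_degree,
    nsmul_eq_mul]

lemma pushStep_nonneg {c : ℝ} (hc : 0 ≤ c) (B : Finset V) {p : V → ℝ} (hp : 0 ≤ p) :
    0 ≤ G.pushStep c B p := fun w => by
  refine add_nonneg (by split_ifs; exacts [le_rfl, hp w]) (sum_nonneg fun v _ => ?_)
  split_ifs
  exacts [div_nonneg (mul_nonneg hc (hp v)) (Nat.cast_nonneg _), le_rfl]

-- A vertex of degree `0` spreads nothing (`c * p v / 0 = 0`), so the mass only drops further.
lemma sum_pushStep_le {c : ℝ} (hc : 0 ≤ c) (B : Finset V) {p : V → ℝ} (hp : 0 ≤ p) :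
    ∑ w, G.pushStep c B p w ≤ ∑ w, p w - (1 - c) * ∑ v ∈ B, p v := by
  have hkept : ∑ w, (if w ∈ B then 0 else p w) = ∑ w ∈ Bᶜ, p w := by
    rw [sum_ite, sum_const_zero, zero_add]
    congr 1
    ext
    simp
  have hspread : ∑ w, ∑ v ∈ B, (if G.Adj v w then c * p v / G.degree v else 0)
      ≤ c * ∑ v ∈ B, p v := by
    rw [sum_comm, mul_sum]
    refine sum_le_sum fun v _ => ?_
    rw [sum_ite_adj_eq_degree_mul]
    rcases eq_or_ne (G.degree v : ℝ) 0 with h | h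
    · rw [h, zero_mul]
      exact mul_nonneg hc (hp v)
    · rw [mul_div_cancel₀ _ h]
  simp only [pushStep, sum_add_distrib, hkept]
  linarith [sum_compl_add_sum B p]

lemma one_sub_mul_pushed_mass_le {c : ℝ} (hc : 0 ≤ c) {r : ℕ → V → ℝ} {B : ℕ → Finset V}
    (h1 : 0 ≤ r 1) (hr : ∀ i, 1 ≤ i → r (i + 1) = G.pushStep c (B i) (r i)) (T : ℕ) :
    (1 - c) * ∑ i ∈ Icc 1 T, ∑ v ∈ B i, r i v ≤ ∑ w, r 1 w := by
  have hnonneg : ∀ i, 1 ≤ i → 0 ≤ r i := by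
    intro i hi
    induction i, hi using Nat.le_induction with
    | base => exact h1
    | succ i hi ih =>
      rw [hr i hi]
      exact pushStep_nonneg (G := G) hc _ ih
  have hstep : ∀ i, 1 ≤ i → ∑ w, r (i + 1) w + (1 - c) * ∑ v ∈ B i, r i v ≤ ∑ w, r i w := by
    intro i hi
    rw [hr i hi]
    linarith [sum_pushStep_le (G := G) hc (B i) (hnonneg i hi)]
  rw [mul_sum]
  calc ∑ i ∈ Icc 1 T, (1 - c) * ∑ v ∈ B i, r i v
      ≤ ∑ w, r 1 w - ∑ w, r (T + 1) w :=
        sum_Icc_le_sub_of_add_le (m := fun i => ∑ w, r i w) hstep T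
    _ ≤ ∑ w, r 1 w := sub_le_self _ (sum_nonneg fun w _ => hnonneg (T + 1) (by omega) w)

end SimpleGraph

theorem pr_nibble_optimized_work_bound_any_schedule_general
    {V : Type*} [Fintype V] [DecidableEq V] (G : SimpleGraph V) [DecidableRel G.Adj]
    (α ε : ℝ) (hα : α ∈ Set.Ioo (0 : ℝ) 1) (hε : 0 < ε)
    (x : V)
    (r : ℕ → V → ℝ) (B : ℕ → Finset V)
    (hinit : ∀ v : V, r 1 v = if v = x then 1 else 0)
    (hB : ∀ i, 1 ≤ i → ∀ v ∈ B i, ε * (G.degree v : ℝ) ≤ r i v)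
    (hrec : ∀ i, 1 ≤ i → ∀ w : V,
      r (i + 1) w = (if w ∈ B i then 0 else r i w)
        + ∑ v ∈ B i, if G.Adj v w then
            ((1 - α) / (1 + α)) * r i v / (G.degree v : ℝ) else 0) :
    ∀ T : ℕ, 1 ≤ T →
      ∑ i ∈ Finset.Icc 1 T, ∑ v ∈ B i, (G.degree v : ℝ) ≤ 1 / (α * ε) := by
  intro T _
  obtain ⟨hα0, hα1⟩ := hα
  have hc : 0 ≤ (1 - α) / (1 + α) := div_nonneg (by linarith) (by linarith)
  have hα_le : α ≤ 1 - (1 - α) / (1 + α) := by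
    rw [le_sub_iff_add_le, ← le_sub_iff_add_le', div_le_iff₀ (by linarith)]
    nlinarith
  have hr1 : 0 ≤ r 1 := fun v => by rw [hinit]; split_ifs <;> norm_num
  have hmass := SimpleGraph.one_sub_mul_pushed_mass_le (G := G) hc hr1
    (fun i hi => funext (hrec i hi)) T
  have hdeg : ε * ∑ i ∈ Icc 1 T, ∑ v ∈ B i, (G.degree v : ℝ)
      ≤ ∑ i ∈ Icc 1 T, ∑ v ∈ B i, r i v := by
    simp only [mul_sum]
    exact sum_le_sum fun i hi => sum_le_sum (hB i (mem_Icc.mp hi).1)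
  rw [le_div_iff₀ (by positivity)]
  calc (∑ i ∈ Icc 1 T, ∑ v ∈ B i, (G.degree v : ℝ)) * (α * ε)
      = α * (ε * ∑ i ∈ Icc 1 T, ∑ v ∈ B i, (G.degree v : ℝ)) := by ring
    _ ≤ (1 - (1 - α) / (1 + α)) * ∑ i ∈ Icc 1 T, ∑ v ∈ B i, r i v :=
        mul_le_mul hα_le hdeg (by positivity) (by linarith)
    _ ≤ ∑ w, r 1 w := hmass
    _ = 1 := by simp [hinit]

/-- **PR-Nibble (optimized update rule), work bound for arbitrary push schedules.**
Given any sequence of push sets `B i ⊆ {v : r i v ≥ ε·d(v)}`, with residuals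
`r 1 = 𝟙_x` and
`r (i+1) w = (if w ∈ B i then 0 else r i w) + Σ_{v ∈ B i, {v,w} ∈ E} ((1-α)/(1+α))·r i v / d(v)`,
the total degree of all pushed vertices satisfies
`Σ_{i=1}^{T} Σ_{v ∈ B i} d(v) ≤ 1/(α·ε)` for every `T ≥ 1`.
This covers both the sequential algorithm (singleton `B i`) and the parallel
algorithm (`B i` the full active set). -/
theorem pr_nibble_optimized_work_bound_any_schedule
    {V : Type*} [Fintype V] [DecidableEq V] (G : SimpleGraph V) [DecidableRel G.Adj]
    (hd : ∀ v : V, 0 < G.degree v)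
    (α ε : ℝ) (hα : α ∈ Set.Ioo (0 : ℝ) 1) (hε : 0 < ε)
    (x : V)
    (r : ℕ → V → ℝ) (B : ℕ → Finset V)
    (hinit : ∀ v : V, r 1 v = if v = x then 1 else 0)
    (hB : ∀ i, 1 ≤ i → ∀ v ∈ B i, ε * (G.degree v : ℝ) ≤ r i v)
    (hrec : ∀ i, 1 ≤ i → ∀ w : V,
      r (i + 1) w = (if w ∈ B i then 0 else r i w)
        + ∑ v ∈ B i, if G.Adj v w then
            ((1 - α) / (1 + α)) * r i v / (G.degree v : ℝ) else 0) :
    ∀ T : ℕ, 1 ≤ T →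
      ∑ i ∈ Finset.Icc 1 T, ∑ v ∈ B i, (G.degree v : ℝ) ≤ 1 / (α * ε) :=
  pr_nibble_optimized_work_bound_any_schedule_general G α ε hα hε x r B hinit hB hrec
end
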